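/- arXiv:2112.11080 — 5 statements merged into one kernel-verified Lean document; each statement's English description precedes it below -/
import Mathlib

section
/- Let V be a finite-dimensional real Hilbert space with SPD operator A, decomposed as V = Σ_{i=1}^N V_i with V_i = span{φ_i}. Let R be the successive subspace correction (symmetric Gauss–Seidel) smoother associated to this decomposition, and let P_i : V → V_i be the A-orthogonal-like projections defined by (A P_i v, u) = (A v, u) for all u ∈ V_i. Define κ_{im} = 0 if P_i P_m = 0 and 1 otherwise, n₀ = max_i Σ_m κ_{im}. If n₀ ≤ c₁ and if for each u ∈ V there is a decomposition u = Σ u_i, u_i ∈ V_i, with Σ‖u_i‖² ≤ c₀‖u‖², then ‖u‖²/λ ≤ 2c₀(1 + c₁²)(R̃u, u) for all u ∈ V, where λ is the largest eigenvalue of A and R̃ = (I − K*K)A⁻¹ with K = I − RA. -/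
open RealInnerProductSpace
open scoped Classical

variable {V : Type*} [NormedAddCommGroup V] [InnerProductSpace ℝ V]

/-- The successive subspace correction (symmetric Gauss–Seidel type) iteration for the
one-dimensional decomposition spanned by `φ 0, …, φ (N-1)`:
`v_0 = 0`, `v_i = v_{i-1} + A_i⁻¹ Q_i (w − A v_{i-1})`. -/
noncomputable def sscIter (A : Module.End ℝ V) (φ : ℕ → V) (w : V) : ℕ → V
  | 0 => 0
  | i + 1 =>
    let v := sscIter A φ w i
    v + ((⟪w - A v, φ i⟫) / ⟪A (φ i), φ i⟫) • φ i

/-- The projection `P_i : V → V_i` defined by `(A P_i v, u) = (A v, u)` for `u ∈ V_i`. -/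
noncomputable def sscProj (A : Module.End ℝ V) (φ : ℕ → V) (i : ℕ) (v : V) : V :=
  (⟪A v, φ i⟫ / ⟪A (φ i), φ i⟫) • φ i

/-! ### Auxiliary lemmas -/

/-- Cauchy–Schwarz for the nonnegative symmetric bilinear form `(x,y) ↦ ⟪A x, y⟫`. -/
lemma ssc_aux_cs (A : Module.End ℝ V) (hAsym : ∀ u v : V, ⟪A u, v⟫ = ⟪u, A v⟫)
    (hpos : ∀ u : V, 0 ≤ ⟪A u, u⟫) (x y : V) :
    ⟪A x, y⟫ ≤ Real.sqrt ⟪A x, x⟫ * Real.sqrt ⟪A y, y⟫ := by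
  have key : ∀ t : ℝ, 0 ≤ ⟪A y, y⟫ * (t * t) + (-(2 * ⟪A x, y⟫)) * t + ⟪A x, x⟫ := by
    intro t
    have h0 := hpos (x - t • y)
    have e1 : A (x - t • y) = A x - t • A y := by simp
    rw [e1, inner_sub_left, inner_sub_right, inner_sub_right, inner_smul_left,
      inner_smul_right, inner_smul_left, inner_smul_right] at h0
    have hsy : ⟪A y, x⟫ = ⟪A x, y⟫ := by rw [hAsym, real_inner_comm]
    simp only [RCLike.ofReal_real_eq_id, id_eq, starRingEnd_apply, star_trivial] at h0
    rw [hsy] at h0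
    nlinarith [h0]
  have hd := discrim_le_zero key
  rw [discrim] at hd
  have h1 : ⟪A x, y⟫ ^ 2 ≤ ⟪A x, x⟫ * ⟪A y, y⟫ := by nlinarith [hd]
  calc ⟪A x, y⟫ ≤ |⟪A x, y⟫| := le_abs_self _
    _ = Real.sqrt (⟪A x, y⟫ ^ 2) := (Real.sqrt_sq_eq_abs _).symm
    _ ≤ Real.sqrt (⟪A x, x⟫ * ⟪A y, y⟫) := Real.sqrt_le_sqrt h1
    _ = Real.sqrt ⟪A x, x⟫ * Real.sqrt ⟪A y, y⟫ := Real.sqrt_mul (hpos x) _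

/-- Rayleigh-quotient upper bound by the largest eigenvalue. -/
lemma ssc_aux_rayleigh [FiniteDimensional ℝ V] (A : Module.End ℝ V)
    (hAsym : ∀ u v : V, ⟪A u, v⟫ = ⟪u, A v⟫) (lam : ℝ)
    (hub : ∀ μ : ℝ, Module.End.HasEigenvalue A μ → μ ≤ lam) (v : V) :
    ⟪A v, v⟫ ≤ lam * ‖v‖ ^ 2 := by
  set n := Module.finrank ℝ V with hn
  have hS : (A : V →ₗ[ℝ] V).IsSymmetric := fun x y => hAsym x y
  have hrfl : Module.finrank ℝ V = n := rfl
  set b := hS.eigenvectorBasis hrfl with hb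
  have h1 : ⟪A v, v⟫ = ∑ i, ⟪A v, b i⟫ * ⟪b i, v⟫ := (b.sum_inner_mul_inner _ _).symm
  have h2 : (‖v‖ : ℝ) ^ 2 = ∑ i, ⟪v, b i⟫ * ⟪b i, v⟫ := by
    rw [b.sum_inner_mul_inner, real_inner_self_eq_norm_sq]
  rw [h1, h2, Finset.mul_sum]
  apply Finset.sum_le_sum
  intro i _
  have hev : ⟪A v, b i⟫ = hS.eigenvalues hrfl i * ⟪v, b i⟫ := by
    rw [hAsym]
    have : A (b i) = hS.eigenvalues hrfl i • b i := hS.apply_eigenvectorBasis hrfl i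
    rw [this, real_inner_smul_right]
  rw [hev, real_inner_comm (b i) v]
  have hle : hS.eigenvalues hrfl i ≤ lam := hub _ (hS.hasEigenvalue_eigenvalues hrfl i)
  nlinarith [sq_nonneg (⟪v, b i⟫ : ℝ), hle]

/-- The error `e_i = w - v_i` of the SSC iteration applied to `u = A w`. -/
noncomputable def sscErr (A : Module.End ℝ V) (φ : ℕ → V) (w u : V) (i : ℕ) : V :=
  w - sscIter A φ u i

/-- The correction `p_i = P_i e_i`. -/
noncomputable def sscP (A : Module.End ℝ V) (φ : ℕ → V) (w u : V) (i : ℕ) : V :=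
  sscProj A φ i (sscErr A φ w u i)

lemma sscErr_zero (A : Module.End ℝ V) (φ : ℕ → V) (w u : V) :
    sscErr A φ w u 0 = w := by simp [sscErr, sscIter]

lemma sscErr_succ (A : Module.End ℝ V) (φ : ℕ → V) (w u : V) (hAw : A w = u) (i : ℕ) :
    sscErr A φ w u (i + 1) = sscErr A φ w u i - sscP A φ w u i := by
  simp only [sscErr, sscP, sscProj, sscIter]
  rw [map_sub, hAw, sub_add_eq_sub_sub]

lemma ssc_sum_p (A : Module.End ℝ V) (φ : ℕ → V) (w u : V) (hAw : A w = u) (n : ℕ) :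
    w = sscErr A φ w u n + ∑ j ∈ Finset.range n, sscP A φ w u j := by
  induction n with
  | zero => simp [sscErr_zero]
  | succ k ih =>
    rw [Finset.sum_range_succ, sscErr_succ A φ w u hAw k]
    conv_lhs => rw [ih]
    abel

lemma ssc_orth (A : Module.End ℝ V) (φ : ℕ → V) (w u : V) (hAw : A w = u) (i : ℕ)
    (hd : ⟪A (φ i), φ i⟫ ≠ 0) :
    ⟪A (sscErr A φ w u (i + 1)), φ i⟫ = 0 := by
  rw [sscErr_succ A φ w u hAw i, map_sub, inner_sub_left]
  simp only [sscP, sscProj, map_smul, real_inner_smul_left]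
  field_simp
  ring

lemma ssc_energy (A : Module.End ℝ V) (hAsym : ∀ u v : V, ⟪A u, v⟫ = ⟪u, A v⟫)
    (φ : ℕ → V) (w u : V) (hAw : A w = u) (i : ℕ) (hd : ⟪A (φ i), φ i⟫ ≠ 0) :
    ⟪A (sscErr A φ w u i), sscErr A φ w u i⟫ =
      ⟪A (sscErr A φ w u (i + 1)), sscErr A φ w u (i + 1)⟫ +
        ⟪A (sscP A φ w u i), sscP A φ w u i⟫ := by
  set e := sscErr A φ w u i with he
  set x := sscP A φ w u i with hx
  have hxc : ⟪A e, x⟫ = ⟪A x, x⟫ := by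
    rw [hx]
    simp only [sscP, sscProj, ← he, map_smul, real_inner_smul_left, real_inner_smul_right]
    field_simp
  have hxe : ⟪A x, e⟫ = ⟪A e, x⟫ := by rw [hAsym, real_inner_comm]
  rw [sscErr_succ A φ w u hAw i, ← he, ← hx, map_sub, inner_sub_left, inner_sub_right,
    inner_sub_right]
  linarith

lemma ssc_tel (A : Module.End ℝ V) (hAsym : ∀ u v : V, ⟪A u, v⟫ = ⟪u, A v⟫)
    (φ : ℕ → V) (w u : V) (hAw : A w = u) (N : ℕ)
    (hd : ∀ i < N, ⟪A (φ i), φ i⟫ ≠ 0) :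
    ⟪A w, w⟫ = ⟪A (sscErr A φ w u N), sscErr A φ w u N⟫ +
      ∑ i ∈ Finset.range N, ⟪A (sscP A φ w u i), sscP A φ w u i⟫ := by
  induction N with
  | zero => simp [sscErr_zero]
  | succ k ih =>
    have ih' := ih (fun i hi => hd i (Nat.lt_succ_of_lt hi))
    rw [Finset.sum_range_succ, ih',
      ssc_energy A hAsym φ w u hAw k (hd k (Nat.lt_succ_self k))]
    ring

lemma sscProj_inner_eq_zero (A : Module.End ℝ V) (φ : ℕ → V) (i : ℕ) (hφi : φ i ≠ 0)
    (hd : ⟪A (φ i), φ i⟫ ≠ 0) (x : V) (hx : sscProj A φ i x = 0) : ⟪A x, φ i⟫ = 0 := by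
  rw [sscProj, smul_eq_zero] at hx
  rcases hx with h | h
  · exact (div_eq_zero_iff.mp h).resolve_right hd
  · exact absurd h hφi

lemma sscProj_comp_eq_zero_iff (A : Module.End ℝ V) (φ : ℕ → V) (i j : ℕ)
    (hφi : φ i ≠ 0) (hdi : ⟪A (φ i), φ i⟫ ≠ 0) (hdj : ⟪A (φ j), φ j⟫ ≠ 0) :
    (∀ v : V, sscProj A φ i (sscProj A φ j v) = 0) ↔ ⟪A (φ j), φ i⟫ = 0 := by
  constructor
  · intro h
    have h1 : sscProj A φ j (φ j) = φ j := by
      rw [sscProj, div_self hdj, one_smul]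
    have h2 := h (φ j)
    rw [h1] at h2
    exact sscProj_inner_eq_zero A φ i hφi hdi (φ j) h2
  · intro h v
    simp only [sscProj, map_smul, real_inner_smul_left, h]
    simp

/-- Bramble–Pasciak's smoothing estimate for the SSC (symmetric Gauss–Seidel) smoother:
under the limited-interaction and stable-decomposition assumptions,
`‖u‖²/λ ≤ 2c₀(1 + c₁²)(R̃u, u)`. -/
theorem ssc_smoothing_property
    [FiniteDimensional ℝ V]
    (A : Module.End ℝ V)
    (hAsym : ∀ u v : V, ⟪A u, v⟫ = ⟪u, A v⟫)
    (hApos : ∀ u : V, u ≠ 0 → 0 < ⟪A u, u⟫)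
    (lam : ℝ)
    (hlam : Module.End.HasEigenvalue A lam ∧
      ∀ μ : ℝ, Module.End.HasEigenvalue A μ → μ ≤ lam)
    (N : ℕ) (φ : ℕ → V) (hφ : ∀ i < N, φ i ≠ 0)
    (hspan : Submodule.span ℝ (φ '' Set.Iio N) = ⊤)
    (Rlin : Module.End ℝ V) (hR : ∀ w : V, Rlin w = sscIter A φ w N)
    (K Kst Ainv Rtil : Module.End ℝ V)
    (hK : K = 1 - Rlin * A)
    (hKadj : ∀ u v : V, ⟪A (K u), v⟫ = ⟪A u, Kst v⟫)
    (hAinv : A * Ainv = 1)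
    (hRtil : Rtil = (1 - Kst * K) * Ainv)
    (c0 c1 : ℝ) (hc0 : 0 < c0) (hc1 : 0 ≤ c1)
    -- limited interaction: `n₀ ≤ c₁`
    (hn0 : ((((Finset.range N).sup (fun i =>
      ((Finset.range N).filter
        (fun m => ¬ ∀ v : V, sscProj A φ i (sscProj A φ m v) = 0)).card) : ℕ) : ℝ) ≤ c1))
    -- stable decomposition: `u = Σ u_i` with `Σ ‖u_i‖² ≤ c₀ ‖u‖²`
    (hdec : ∀ u : V, ∃ coef : ℕ → ℝ,
      u = ∑ i ∈ Finset.range N, coef i • φ i ∧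
      ∑ i ∈ Finset.range N, ‖coef i • φ i‖ ^ 2 ≤ c0 * ‖u‖ ^ 2) :
    ∀ u : V, ‖u‖ ^ 2 / lam ≤ 2 * c0 * (1 + c1 ^ 2) * ⟪Rtil u, u⟫ := by
  intro u
  by_cases hu0 : u = 0
  · simp [hu0]
  have hpos0 : ∀ v : V, 0 ≤ ⟪A v, v⟫ := by
    intro v
    rcases eq_or_ne v 0 with h | h
    · simp [h]
    · exact (hApos v h).le
  have hlampos : 0 < lam := by
    obtain ⟨x, hx⟩ := hlam.1.exists_hasEigenvector
    have hx0 : x ≠ 0 := hx.right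
    have hxA : A x = lam • x := hx.apply_eq_smul
    have h1 := hApos x hx0
    rw [hxA, real_inner_smul_left] at h1
    have h2 : (0:ℝ) < ⟪x, x⟫ := by
      rw [real_inner_self_eq_norm_sq]
      have : (0:ℝ) < ‖x‖ := norm_pos_iff.mpr hx0
      positivity
    nlinarith
  have hd : ∀ i < N, (0:ℝ) < ⟪A (φ i), φ i⟫ := fun i hi => hApos _ (hφ i hi)
  set w := Ainv u with hw
  have hAw : A w = u := by
    have h := LinearMap.ext_iff.mp hAinv u
    simpa [Module.End.mul_apply] using h
  -- `⟪Rtil u, u⟫ = ∑ ⟪A p i, p i⟫`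
  have heN : sscErr A φ w u N = K w := by
    rw [hK]
    have h1 : ((1 - Rlin * A) : Module.End ℝ V) w = w - Rlin (A w) := by
      simp [LinearMap.sub_apply, Module.End.mul_apply]
    rw [h1, hAw, hR u]
    rfl
  have hRtilu : ⟪Rtil u, u⟫ = ∑ i ∈ Finset.range N, ⟪A (sscP A φ w u i), sscP A φ w u i⟫ := by
    have h1 : Rtil u = w - Kst (K w) := by
      rw [hRtil]
      have : (((1 - Kst * K) * Ainv) : Module.End ℝ V) u = Ainv u - Kst (K (Ainv u)) := by
        simp [LinearMap.sub_apply, Module.End.mul_apply]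
      rw [this, ← hw]
    rw [h1, inner_sub_left]
    have h2 : ⟪w, u⟫ = ⟪A w, w⟫ := by
      conv_lhs => rw [← hAw]
      rw [real_inner_comm]
    have h3 : ⟪Kst (K w), u⟫ = ⟪A (sscErr A φ w u N), sscErr A φ w u N⟫ := by
      conv_lhs => rw [← hAw]
      rw [real_inner_comm, ← hKadj w (K w), ← heN]
    have h4 := ssc_tel A hAsym φ w u hAw N (fun i hi => (hd i hi).ne')
    rw [h2, h3]
    linarith
  have hEnn : 0 ≤ ⟪Rtil u, u⟫ := by
    rw [hRtilu]; exact Finset.sum_nonneg (fun i _ => hpos0 _)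
  obtain ⟨coef, hu, hstab⟩ := hdec u
  -- interaction characterization and counting bounds
  have hchar : ∀ i < N, ∀ j < N,
      ((∀ v : V, sscProj A φ i (sscProj A φ j v) = 0) ↔ ⟪A (φ j), φ i⟫ = 0) :=
    fun i hi j hj => sscProj_comp_eq_zero_iff A φ i j (hφ i hi) (hd i hi).ne' (hd j hj).ne'
  have hrow : ∀ i ∈ Finset.range N,
      ((((Finset.range N).filter
        (fun m => ¬ ∀ v : V, sscProj A φ i (sscProj A φ m v) = 0)).card : ℕ) : ℝ) ≤ c1 :=
    fun i hi => le_trans (Nat.cast_le.mpr (Finset.le_sup (f := fun i =>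
      ((Finset.range N).filter
        (fun m => ¬ ∀ v : V, sscProj A φ i (sscProj A φ m v) = 0)).card) hi)) hn0
  have hcol : ∀ j ∈ Finset.range N,
      ((((Finset.range N).filter
        (fun i => ¬ ∀ v : V, sscProj A φ i (sscProj A φ j v) = 0)).card : ℕ) : ℝ) ≤ c1 := by
    intro j hj
    have hjN := Finset.mem_range.mp hj
    have heq : (Finset.range N).filter
        (fun i => ¬ ∀ v : V, sscProj A φ i (sscProj A φ j v) = 0)
        = (Finset.range N).filter
        (fun m => ¬ ∀ v : V, sscProj A φ j (sscProj A φ m v) = 0) := by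
      apply Finset.filter_congr
      intro i hi
      have hiN := Finset.mem_range.mp hi
      have hsym : ⟪A (φ j), φ i⟫ = ⟪A (φ i), φ j⟫ := by rw [hAsym, real_inner_comm]
      rw [hchar i hiN j hjN, hchar j hjN i hiN, hsym]
    rw [heq]
    exact hrow j hj
  -- expansion of ‖u‖²
  have hexp : (‖u‖:ℝ)^2 = ∑ i ∈ Finset.range N, ∑ j ∈ Finset.range (i+1),
      coef i * ⟪A (sscP A φ w u j), φ i⟫ := by
    have h0 : (‖u‖:ℝ)^2 = ⟪A w, u⟫ := by rw [hAw, real_inner_self_eq_norm_sq]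
    rw [h0]
    conv_lhs => rw [hu]
    rw [inner_sum]
    refine Finset.sum_congr rfl (fun i hi => ?_)
    have hiN := Finset.mem_range.mp hi
    rw [real_inner_smul_right]
    have hw2 : A w = A (sscErr A φ w u (i+1))
        + ∑ j ∈ Finset.range (i+1), A (sscP A φ w u j) := by
      conv_lhs => rw [ssc_sum_p A φ w u hAw (i+1)]
      rw [map_add, map_sum]
    rw [hw2, inner_add_left, sum_inner, ssc_orth A φ w u hAw i (hd i hiN).ne', zero_add,
      Finset.mul_sum]
  set al : ℕ → ℝ := fun j => Real.sqrt ⟪A (sscP A φ w u j), sscP A φ w u j⟫ with hal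
  set be : ℕ → ℝ := fun i => Real.sqrt ⟪A (coef i • φ i), coef i • φ i⟫ with hbe
  have halnn : ∀ j, 0 ≤ al j := fun j => Real.sqrt_nonneg _
  have hbenn : ∀ i, 0 ≤ be i := fun i => Real.sqrt_nonneg _
  have hterm : ∀ i < N, ∀ j, coef i * ⟪A (sscP A φ w u j), φ i⟫ ≤
      (if (¬ ∀ v : V, sscProj A φ i (sscProj A φ j v) = 0) then al j * be i else 0) := by
    intro i hiN j
    by_cases hK0 : ∀ v : V, sscProj A φ i (sscProj A φ j v) = 0
    · rw [if_neg (not_not_intro hK0)]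
      have h1 : sscProj A φ i (sscP A φ w u j) = 0 := hK0 (sscErr A φ w u j)
      have h2 : ⟪A (sscP A φ w u j), φ i⟫ = 0 :=
        sscProj_inner_eq_zero A φ i (hφ i hiN) (hd i hiN).ne' _ h1
      rw [h2, mul_zero]
    · rw [if_pos hK0]
      have h1 : coef i * ⟪A (sscP A φ w u j), φ i⟫
          = ⟪A (sscP A φ w u j), coef i • φ i⟫ := by
        rw [real_inner_smul_right]
      rw [h1]
      exact ssc_aux_cs A hAsym hpos0 _ _
  set S := (Finset.range N ×ˢ Finset.range N).filter
      (fun q : ℕ × ℕ => ¬ ∀ v : V, sscProj A φ q.1 (sscProj A φ q.2 v) = 0) with hS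
  have hmain1 : (‖u‖:ℝ)^2 ≤ ∑ q ∈ S, al q.2 * be q.1 := by
    rw [hexp, hS, Finset.sum_filter, Finset.sum_product]
    apply Finset.sum_le_sum
    intro i hi
    have hiN := Finset.mem_range.mp hi
    calc ∑ j ∈ Finset.range (i+1), coef i * ⟪A (sscP A φ w u j), φ i⟫
        ≤ ∑ j ∈ Finset.range (i+1),
          (if (¬ ∀ v : V, sscProj A φ i (sscProj A φ j v) = 0) then al j * be i else 0) :=
          Finset.sum_le_sum (fun j _ => hterm i hiN j)
      _ ≤ ∑ j ∈ Finset.range N,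
          (if (¬ ∀ v : V, sscProj A φ i (sscProj A φ j v) = 0) then al j * be i else 0) := by
          apply Finset.sum_le_sum_of_subset_of_nonneg
          · exact Finset.range_subset_range.mpr hiN
          · intro j _ _
            split_ifs <;> first
            | exact mul_nonneg (halnn j) (hbenn i)
            | exact le_refl (0:ℝ)
  have hCS : ∑ q ∈ S, al q.2 * be q.1 ≤
      Real.sqrt (∑ q ∈ S, (al q.2)^2) * Real.sqrt (∑ q ∈ S, (be q.1)^2) :=
    Real.sum_mul_le_sqrt_mul_sqrt S (fun q => al q.2) (fun q => be q.1)
  have hXcount : ∑ q ∈ S, (al q.2)^2 ≤ c1 * ∑ j ∈ Finset.range N, (al j)^2 := by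
    rw [hS, Finset.sum_filter, Finset.sum_product, Finset.sum_comm, Finset.mul_sum]
    apply Finset.sum_le_sum
    intro j hj
    rw [← Finset.sum_filter]
    dsimp only
    rw [Finset.sum_const, nsmul_eq_mul]
    exact mul_le_mul_of_nonneg_right (hcol j hj) (sq_nonneg _)
  have hYcount : ∑ q ∈ S, (be q.1)^2 ≤ c1 * ∑ i ∈ Finset.range N, (be i)^2 := by
    rw [hS, Finset.sum_filter, Finset.sum_product, Finset.mul_sum]
    apply Finset.sum_le_sum
    intro i hi
    rw [← Finset.sum_filter]
    dsimp only
    rw [Finset.sum_const, nsmul_eq_mul]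
    exact mul_le_mul_of_nonneg_right (hrow i hi) (sq_nonneg _)
  have hbesum : ∑ i ∈ Finset.range N, (be i)^2 ≤ lam * (c0 * ‖u‖^2) := by
    have h1 : ∀ i ∈ Finset.range N, (be i)^2 ≤ lam * ‖coef i • φ i‖^2 := by
      intro i _
      rw [hbe]
      rw [Real.sq_sqrt (hpos0 _)]
      exact ssc_aux_rayleigh A hAsym lam hlam.2 _
    calc ∑ i ∈ Finset.range N, (be i)^2
        ≤ ∑ i ∈ Finset.range N, lam * ‖coef i • φ i‖^2 := Finset.sum_le_sum h1
      _ = lam * ∑ i ∈ Finset.range N, ‖coef i • φ i‖^2 := (Finset.mul_sum _ _ _).symm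
      _ ≤ lam * (c0 * ‖u‖^2) := mul_le_mul_of_nonneg_left hstab hlampos.le
  have halsum : ∑ j ∈ Finset.range N, (al j)^2 = ⟪Rtil u, u⟫ := by
    rw [hRtilu]
    refine Finset.sum_congr rfl (fun j _ => ?_)
    rw [hal]
    exact Real.sq_sqrt (hpos0 _)
  have h5 : (‖u‖:ℝ)^2 ≤
      Real.sqrt (c1 * ⟪Rtil u, u⟫) * Real.sqrt (c1 * (lam * (c0 * ‖u‖^2))) := by
    refine le_trans hmain1 (le_trans hCS ?_)
    have hX' : ∑ q ∈ S, (al q.2)^2 ≤ c1 * ⟪Rtil u, u⟫ := by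
      rw [← halsum]; exact hXcount
    have hY' : ∑ q ∈ S, (be q.1)^2 ≤ c1 * (lam * (c0 * ‖u‖^2)) :=
      le_trans hYcount (mul_le_mul_of_nonneg_left hbesum hc1)
    exact mul_le_mul (Real.sqrt_le_sqrt hX') (Real.sqrt_le_sqrt hY')
      (Real.sqrt_nonneg _) (Real.sqrt_nonneg _)
  have hu2pos : (0:ℝ) < ‖u‖^2 := by
    have : (0:ℝ) < ‖u‖ := norm_pos_iff.mpr hu0
    positivity
  have h6 : ((‖u‖:ℝ)^2)^2 ≤ (c1 * ⟪Rtil u, u⟫) * (c1 * (lam * (c0 * ‖u‖^2))) := by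
    have hn1 : 0 ≤ c1 * ⟪Rtil u, u⟫ := mul_nonneg hc1 hEnn
    have hn2 : 0 ≤ c1 * (lam * (c0 * ‖u‖^2)) := by
      apply mul_nonneg hc1
      have : (0:ℝ) ≤ lam := hlampos.le
      positivity
    have hsq := pow_le_pow_left₀ (by positivity) h5 2
    rwa [mul_pow, Real.sq_sqrt hn1, Real.sq_sqrt hn2] at hsq
  have h7 : (‖u‖:ℝ)^2 ≤ c1^2 * lam * c0 * ⟪Rtil u, u⟫ := by
    nlinarith [h6, hu2pos, hEnn]
  rw [div_le_iff₀ hlampos]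
  nlinarith [mul_nonneg (mul_nonneg hc0.le hlampos.le) hEnn, h7, sq_nonneg c1]
end

section
/- Let E_{j-1} be a coarse element agglomerated from fine elements E_j ∈ 𝒯_{E_{j-1}}, and let the prolongation I_{j-1}^j be defined nodewise by (I_{j-1}^j u)(x_i) = u(x_i) for nodes x_i of E_{j-1}, and (I_{j-1}^j u)(x_i) = (Π₁⁰_{E_{j-1}} u)(x_i) for the remaining fine nodes. Assume the discrete norm equivalences ‖v‖²_{L²(E)} ≂ δ² Σ_{nodes} v(x_i)² on each element and ‖v‖²_{L²(E_{j-1})} ≂ δ_j² Σ_i #𝒞^{x_i} v(x_i)² on the patch, and the L²-stability ‖Π₁⁰_{E_{j-1}} u‖_{L²(E_{j-1})} ≤ ‖u‖_{L²(E_{j-1})}. Then ‖I_{j-1}^j u‖_{L²(E_{j-1})} ≤ C ‖u‖_{L²(E_{j-1})} for all u in the coarse local space, where C depends only on the ratio δ_j/δ_{j-1}, the maximal number of fine elements sharing a node, and the norm-equivalence constants. -/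
/-- L²-stability of the agglomeration prolongation operator: under the nodal
norm equivalences and the L²-stability of the projection `Π₁⁰`, one has
`‖I u‖_{L²(E_{j-1})} ≤ C ‖u‖_{L²(E_{j-1})}` for all coarse functions `u`, with a
constant depending only on `δ_j/δ_{j-1}`, the maximal number of fine elements
sharing a node, and the norm-equivalence constants. -/
theorem prolongation_l2_stability
    {W : Type*} [AddCommGroup W] [Module ℝ W]
    {ι : Type*} [Fintype ι] [DecidableEq ι]
    (Nc : Finset ι)                  -- coarse node indices
    (cnt : ι → ℕ)                    -- #𝒞^{x_i}: fine elements sharing node x_i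
    (hcnt1 : ∀ i, 1 ≤ cnt i)
    (Cmax : ℕ) (hCmax : ∀ i, cnt i ≤ Cmax)
    (δj δjm1 : ℝ) (hδj : 0 < δj) (hδjm1 : 0 < δjm1)
    (L2 : W → ℝ) (hL2nonneg : ∀ v, 0 ≤ L2 v)    -- L²(E_{j-1}) norm
    (ev : W →ₗ[ℝ] ι → ℝ)                         -- nodal evaluation v ↦ (v(x_i))
    (Pi0 : W →ₗ[ℝ] W)                            -- L²(E_{j-1})-projection onto ℙ₁
    (hPiStab : ∀ u : W, L2 (Pi0 u) ≤ L2 u)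
    (Iop : W →ₗ[ℝ] W)                            -- prolongation
    (hIopC : ∀ (u : W), ∀ i ∈ Nc, ev (Iop u) i = ev u i)
    (hIopF : ∀ (u : W), ∀ i ∉ Nc, ev (Iop u) i = ev (Pi0 u) i)
    (cp : ℝ) (hcp : 1 ≤ cp)
    -- patch norm equivalence  ‖v‖² ≂ δ_j² Σ_i #𝒞^{x_i} v(x_i)²
    (hpatch : ∀ v : W,
      cp⁻¹ * (δj ^ 2 * ∑ i, (cnt i : ℝ) * (ev v i) ^ 2) ≤ (L2 v) ^ 2 ∧
      (L2 v) ^ 2 ≤ cp * (δj ^ 2 * ∑ i, (cnt i : ℝ) * (ev v i) ^ 2))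
    (Vc : Submodule ℝ W)                          -- coarse local VEM space
    (cc : ℝ) (hcc : 1 ≤ cc)
    -- coarse element norm equivalence ‖u‖² ≂ δ_{j-1}² Σ_{coarse nodes} u(x_i)²
    (hcoarse : ∀ u ∈ Vc,
      cc⁻¹ * (δjm1 ^ 2 * ∑ i ∈ Nc, (ev u i) ^ 2) ≤ (L2 u) ^ 2 ∧
      (L2 u) ^ 2 ≤ cc * (δjm1 ^ 2 * ∑ i ∈ Nc, (ev u i) ^ 2)) :
    ∀ u ∈ Vc,
      (L2 (Iop u)) ^ 2 ≤
        cp * (Cmax : ℝ) * (cc * (δj / δjm1) ^ 2 + cp) * (L2 u) ^ 2 := by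
  intro u hu
  have hL2u2 : (0:ℝ) ≤ (L2 u) ^ 2 := sq_nonneg _
  have hcp0 : (0:ℝ) < cp := lt_of_lt_of_le one_pos hcp
  have hcc0 : (0:ℝ) < cc := lt_of_lt_of_le one_pos hcc
  rcases isEmpty_or_nonempty ι with hι | hι
  · have h := (hpatch (Iop u)).2
    have hsum : ∑ i, (cnt i : ℝ) * (ev (Iop u) i) ^ 2 = 0 := by simp
    rw [hsum] at h
    have hRHS : (0:ℝ) ≤ cp * (Cmax : ℝ) * (cc * (δj / δjm1) ^ 2 + cp) * (L2 u) ^ 2 := by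
      have h1 : (0:ℝ) ≤ cc * (δj / δjm1) ^ 2 + cp := by positivity
      positivity
    nlinarith [sq_nonneg (L2 (Iop u))]
  · obtain ⟨i0⟩ := hι
    have hCmax1 : (1:ℝ) ≤ (Cmax : ℝ) := by
      exact_mod_cast le_trans (hcnt1 i0) (hCmax i0)
    have hA1 : ∑ i ∈ Nc, (cnt i : ℝ) * (ev (Iop u) i) ^ 2
        ≤ (Cmax : ℝ) * ∑ i ∈ Nc, (ev u i) ^ 2 := by
      rw [Finset.mul_sum]
      refine Finset.sum_le_sum fun i hi => ?_
      rw [hIopC u i hi]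
      have hc : (cnt i : ℝ) ≤ (Cmax : ℝ) := by exact_mod_cast hCmax i
      nlinarith [sq_nonneg (ev u i)]
    have hA2 : ∑ i ∈ Ncᶜ, (cnt i : ℝ) * (ev (Iop u) i) ^ 2
        ≤ ∑ i, (cnt i : ℝ) * (ev (Pi0 u) i) ^ 2 := by
      have heq : ∑ i ∈ Ncᶜ, (cnt i : ℝ) * (ev (Iop u) i) ^ 2
          = ∑ i ∈ Ncᶜ, (cnt i : ℝ) * (ev (Pi0 u) i) ^ 2 := by
        refine Finset.sum_congr rfl fun i hi => ?_
        rw [hIopF u i (Finset.mem_compl.mp hi)]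
      rw [heq]
      refine Finset.sum_le_sum_of_subset_of_nonneg (Finset.subset_univ _) ?_
      intro i _ _
      positivity
    have hB1 : δjm1 ^ 2 * ∑ i ∈ Nc, (ev u i) ^ 2 ≤ cc * (L2 u) ^ 2 := by
      have h := (hcoarse u hu).1
      have h2 := mul_le_mul_of_nonneg_left h hcc0.le
      rwa [← mul_assoc, mul_inv_cancel₀ hcc0.ne', one_mul] at h2
    have hB2 : δj ^ 2 * ∑ i, (cnt i : ℝ) * (ev (Pi0 u) i) ^ 2 ≤ cp * (L2 (Pi0 u)) ^ 2 := by
      have h := (hpatch (Pi0 u)).1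
      have h2 := mul_le_mul_of_nonneg_left h hcp0.le
      rwa [← mul_assoc, mul_inv_cancel₀ hcp0.ne', one_mul] at h2
    have hPisq : (L2 (Pi0 u)) ^ 2 ≤ (L2 u) ^ 2 :=
      pow_le_pow_left₀ (hL2nonneg _) (hPiStab u) 2
    have hratio : δj ^ 2 = (δj / δjm1) ^ 2 * δjm1 ^ 2 := by
      field_simp
    have key1 : δj ^ 2 * ∑ i ∈ Nc, (cnt i : ℝ) * (ev (Iop u) i) ^ 2
        ≤ (Cmax : ℝ) * (δj / δjm1) ^ 2 * (cc * (L2 u) ^ 2) := by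
      calc δj ^ 2 * ∑ i ∈ Nc, (cnt i : ℝ) * (ev (Iop u) i) ^ 2
          ≤ δj ^ 2 * ((Cmax : ℝ) * ∑ i ∈ Nc, (ev u i) ^ 2) :=
            mul_le_mul_of_nonneg_left hA1 (by positivity)
        _ = (Cmax : ℝ) * (δj / δjm1) ^ 2 * (δjm1 ^ 2 * ∑ i ∈ Nc, (ev u i) ^ 2) := by
            rw [hratio]; ring
        _ ≤ _ := mul_le_mul_of_nonneg_left hB1 (by positivity)
    have key2 : δj ^ 2 * ∑ i ∈ Ncᶜ, (cnt i : ℝ) * (ev (Iop u) i) ^ 2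
        ≤ cp * (L2 u) ^ 2 := by
      calc δj ^ 2 * ∑ i ∈ Ncᶜ, (cnt i : ℝ) * (ev (Iop u) i) ^ 2
          ≤ δj ^ 2 * ∑ i, (cnt i : ℝ) * (ev (Pi0 u) i) ^ 2 :=
            mul_le_mul_of_nonneg_left hA2 (by positivity)
        _ ≤ cp * (L2 (Pi0 u)) ^ 2 := hB2
        _ ≤ cp * (L2 u) ^ 2 := mul_le_mul_of_nonneg_left hPisq hcp0.le
    have hfin := (hpatch (Iop u)).2
    rw [← Finset.sum_add_sum_compl Nc, mul_add] at hfin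
    nlinarith [mul_nonneg (mul_nonneg hcp0.le hcp0.le) hL2u2,
      mul_le_mul_of_nonneg_left (add_le_add key1 key2) hcp0.le]
end

section
/- With the prolongation I_{j-1}^j defined nodewise as above (coarse node values preserved, interior fine-node values given by the L² projection Π₁⁰_{E_{j-1}} u), one has for every u in the patch space V_j^{E_{j-1}}: ‖Π₁⁰_{E_{j-1}} u − I_{j-1}^j u‖_{L²(E_{j-1})} ≤ C ‖Π₁⁰_{E_{j-1}} u − u‖_{L²(E_{j-1})}, with C depending only on δ_j/δ_{j-1}, the maximal node-element count #𝒞_{E_{j-1}}, and the discrete-norm equivalence constants. -/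
/-- Comparison lemma for the agglomeration prolongation:
`‖Π₁⁰u − Iu‖_{L²(E_{j-1})} ≤ C ‖Π₁⁰u − u‖_{L²(E_{j-1})}` for every `u` in the
patch space, with `C` depending only on the maximal node-element count and the
discrete-norm equivalence constants. -/
theorem prolongation_projection_comparison
    {W : Type*} [AddCommGroup W] [Module ℝ W]
    {ι : Type*} [Fintype ι] [DecidableEq ι]
    (Nc : Finset ι)
    (cnt : ι → ℕ) (hcnt1 : ∀ i, 1 ≤ cnt i)
    (Cmax : ℕ) (hCmax : ∀ i, cnt i ≤ Cmax)
    (δj : ℝ) (hδj : 0 < δj)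
    (L2 : W → ℝ) (hL2nonneg : ∀ v, 0 ≤ L2 v)
    (ev : W →ₗ[ℝ] ι → ℝ)
    (Pi0 : W →ₗ[ℝ] W)
    (Iop : W →ₗ[ℝ] W)
    (hIopC : ∀ (u : W), ∀ i ∈ Nc, ev (Iop u) i = ev u i)
    (hIopF : ∀ (u : W), ∀ i ∉ Nc, ev (Iop u) i = ev (Pi0 u) i)
    (cp : ℝ) (hcp : 1 ≤ cp)
    (hpatch : ∀ v : W,
      cp⁻¹ * (δj ^ 2 * ∑ i, (cnt i : ℝ) * (ev v i) ^ 2) ≤ (L2 v) ^ 2 ∧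
      (L2 v) ^ 2 ≤ cp * (δj ^ 2 * ∑ i, (cnt i : ℝ) * (ev v i) ^ 2)) :
    ∀ u : W,
      (L2 (Pi0 u - Iop u)) ^ 2 ≤ cp ^ 2 * (Cmax : ℝ) * (L2 (Pi0 u - u)) ^ 2 := by
  intro u
  have hcp0 : (0:ℝ) < cp := lt_of_lt_of_le one_pos hcp
  -- nodewise values of Pi0 u - Iop u
  have hval : ∀ i, (ev (Pi0 u - Iop u) i) ^ 2
      = if i ∈ Nc then (ev (Pi0 u - u) i) ^ 2 else 0 := by
    intro i
    by_cases hi : i ∈ Nc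
    · simp [hi, map_sub, hIopC u i hi, Pi.sub_apply]
    · simp [hi, map_sub, hIopF u i hi, Pi.sub_apply]
  have hsum : ∑ i, (cnt i : ℝ) * (ev (Pi0 u - Iop u) i) ^ 2
      ≤ (Cmax : ℝ) * ∑ i, (cnt i : ℝ) * (ev (Pi0 u - u) i) ^ 2 := by
    rw [Finset.mul_sum]
    apply Finset.sum_le_sum
    intro i _
    rw [hval i]
    by_cases hi : i ∈ Nc
    · simp only [hi, if_true]
      have h1 : (cnt i : ℝ) ≤ (Cmax : ℝ) := by exact_mod_cast hCmax i
      have h2 : (1:ℝ) ≤ (cnt i : ℝ) := by exact_mod_cast hcnt1 i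
      have hCm : (1:ℝ) ≤ (Cmax : ℝ) := le_trans h2 h1
      have hx : 0 ≤ (cnt i : ℝ) * (ev (Pi0 u - u) i) ^ 2 :=
        mul_nonneg (by positivity) (sq_nonneg _)
      exact le_mul_of_one_le_left hx hCm
    · simp only [hi, if_false, mul_zero]
      positivity
  have h1 := (hpatch (Pi0 u - Iop u)).2
  have h2 := (hpatch (Pi0 u - u)).1
  have h2' : δj ^ 2 * ∑ i, (cnt i : ℝ) * (ev (Pi0 u - u) i) ^ 2
      ≤ cp * (L2 (Pi0 u - u)) ^ 2 := by
    rw [inv_mul_le_iff₀ hcp0] at h2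
    linarith
  calc (L2 (Pi0 u - Iop u)) ^ 2
      ≤ cp * (δj ^ 2 * ∑ i, (cnt i : ℝ) * (ev (Pi0 u - Iop u) i) ^ 2) := h1
    _ ≤ cp * ((Cmax : ℝ) * (δj ^ 2 * ∑ i, (cnt i : ℝ) * (ev (Pi0 u - u) i) ^ 2)) := by
        have := mul_le_mul_of_nonneg_left hsum (sq_nonneg δj)
        apply mul_le_mul_of_nonneg_left _ hcp0.le
        nlinarith
    _ ≤ cp * ((Cmax : ℝ) * (cp * (L2 (Pi0 u - u)) ^ 2)) := by
        apply mul_le_mul_of_nonneg_left _ hcp0.le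
        exact mul_le_mul_of_nonneg_left h2' (Nat.cast_nonneg _)
    _ = cp ^ 2 * (Cmax : ℝ) * (L2 (Pi0 u - u)) ^ 2 := by ring
end

section
/- Let {𝒜_j}, {I_{j-1}^j}, {P_j^{j-1}}, {B_j}, {K̃_j^{(ν)}} be as in the BPX multigrid framework with inherited forms (C₃ = 1), and assume the approximation property |𝒜_j((I − I_{j-1}^j P_j^{j-1})u, u)| ≤ C₄‖A_j u‖_j²/λ_j and the smoothing property ‖u‖_j²/λ_j ≤ C₅(R̃_j u, u)_j hold for all levels. Then the W-cycle (p = 2) error operator satisfies |𝒜_j((I − B_j A_j)u, u)| ≤ σ 𝒜_j(u,u) for all u ∈ V_j and all j ≥ 1, with σ = M/(M + ν) < 1, where M depends only on C₄ and C₅, uniformly in j and in the number of levels. -/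
open RealInnerProductSpace

set_option maxHeartbeats 4000000 in
/-- Uniform convergence of the W-cycle (p = 2) multigrid algorithm in the BPX
framework with inherited forms: under the approximation and smoothing properties
there is `M = M(C₄, C₅)` such that
`|𝒜_j((I − B_j A_j)u, u)| ≤ σ 𝒜_j(u,u)` with `σ = M/(M+ν) < 1`,
uniformly in the level `j`. -/
theorem W_cycle_uniform_convergence
    (V : ℕ → Type*)
    [∀ j, NormedAddCommGroup (V j)] [∀ j, InnerProductSpace ℝ (V j)]
    [∀ j, FiniteDimensional ℝ (V j)]
    (A : ∀ j, Module.End ℝ (V j))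
    (hsym : ∀ j (u v : V j), ⟪A j u, v⟫ = ⟪u, A j v⟫)
    (hpos : ∀ j (u : V j), u ≠ 0 → 0 < ⟪A j u, u⟫)
    (lam : ℕ → ℝ)
    (hlamEig : ∀ j, Module.End.HasEigenvalue (A j) (lam j) ∧
      ∀ μ : ℝ, Module.End.HasEigenvalue (A j) μ → μ ≤ lam j)
    (I : ∀ j, V j →ₗ[ℝ] V (j + 1))
    -- inherited coarse forms (C₃ = 1): 𝒜_{j+1}(I u, I v) = 𝒜_j(u, v)
    (hinherit : ∀ j (u v : V j), ⟪A (j + 1) (I j u), I j v⟫ = ⟪A j u, v⟫)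
    (P : ∀ j, V (j + 1) →ₗ[ℝ] V j)
    (hP : ∀ j (w : V (j + 1)) (v : V j),
      ⟪A j (P j w), v⟫ = ⟪A (j + 1) w, I j v⟫)
    (R Rt K Kst Ainv Rtil : ∀ j, Module.End ℝ (V j))
    (hRt : ∀ j (u v : V j), ⟪R j u, v⟫ = ⟪u, Rt j v⟫)
    (hK : ∀ j, K j = 1 - R j * A j) (hKst : ∀ j, Kst j = 1 - Rt j * A j)
    (hAinv : ∀ j, A j * Ainv j = 1)
    (hRtil : ∀ j, Rtil j = (1 - Kst j * K j) * Ainv j)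
    (C4 C5 : ℝ) (hC4 : 0 < C4) (hC5 : 0 < C5)
    -- approximation property
    (happrox : ∀ j (u : V (j + 1)),
      |⟪A (j + 1) (u - I j (P j u)), u⟫| ≤ C4 * ‖A (j + 1) u‖ ^ 2 / lam (j + 1))
    -- smoothing property
    (hsmooth : ∀ j (u : V j), ‖u‖ ^ 2 / lam j ≤ C5 * ⟪Rtil j u, u⟫)
    (ν : ℕ) (hν : 1 ≤ ν) (hνeven : Even ν)
    (Ktil : ∀ j, Module.End ℝ (V j))
    (hKtil : ∀ j, Ktil j = (Kst j * K j) ^ (ν / 2))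
    (B : ∀ j, V j → V j)
    -- exact solve on the coarsest level: B₁ = A₁⁻¹
    (hB0 : ∀ g : V 0, A 0 (B 0 g) = g)
    -- W-cycle (p = 2) error-propagation recursion
    (hBrec : ∀ j (u v : V (j + 1)),
      ⟪A (j + 1) (u - B (j + 1) (A (j + 1) u)), v⟫ =
        ⟪A (j + 1) ((Ktil (j + 1)) u - I j (P j ((Ktil (j + 1)) u)) +
          I j ((fun w => w - B j (A j w))^[2] (P j ((Ktil (j + 1)) u)))),
          (Ktil (j + 1)) v⟫) :
    ∃ M : ℝ, 0 < M ∧ M / (M + (ν : ℝ)) < 1 ∧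
      ∀ j (u : V j),
        |⟪A j (u - B j (A j u)), u⟫| ≤ (M / (M + (ν : ℝ))) * ⟪A j u, u⟫ := by
  classical
  obtain ⟨m, hm⟩ := hνeven
  have hmdiv : ν / 2 = m := by omega
  set M : ℝ := C4 * C5 with hMdef
  have hMpos : 0 < M := mul_pos hC4 hC5
  have hνR : (0:ℝ) < (ν : ℝ) := by exact_mod_cast hν
  have hMν : 0 < M + (ν : ℝ) := by linarith
  set σ : ℝ := M / (M + (ν : ℝ)) with hσdef
  have hσpos : 0 < σ := div_pos hMpos hMν
  have hσlt : σ < 1 := by rw [hσdef, div_lt_one hMν]; linarith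
  have hσ1 : σ ≤ 1 := le_of_lt hσlt
  have hσid : (1 - σ) * M = σ * (ν : ℝ) := by
    have hne : M + (ν : ℝ) ≠ 0 := ne_of_gt hMν
    rw [hσdef]; field_simp; ring
  -- basic facts about the forms
  have asym : ∀ j (u v : V j), ⟪A j u, v⟫ = ⟪A j v, u⟫ := by
    intro j u v; rw [hsym, real_inner_comm]
  have annn : ∀ j (u : V j), 0 ≤ ⟪A j u, u⟫ := by
    intro j u
    rcases eq_or_ne u 0 with h | h
    · simp [h]
    · exact le_of_lt (hpos j u h)
  have Azero : ∀ j (z : V j), A j z = 0 → z = 0 := by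
    intro j z h
    by_contra hz
    have h1 := hpos j z hz
    rw [h] at h1; simp at h1
  have aeq : ∀ j (x y : V j), (∀ v : V j, ⟪A j x, v⟫ = ⟪A j y, v⟫) → x = y := by
    intro j x y h
    have h0 : ⟪A j (x - y), x - y⟫ = 0 := by
      rw [map_sub, inner_sub_left, h (x - y), sub_self]
    by_contra hne
    have hsub : x - y ≠ 0 := sub_ne_zero.mpr hne
    exact absurd h0 (ne_of_gt (hpos j _ hsub))
  have AinvA : ∀ j (x : V j), Ainv j (A j x) = x := by
    intro j x
    have h1 : A j (Ainv j (A j x)) = A j x := by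
      have h2 := congrArg (fun f : Module.End ℝ (V j) => f (A j x)) (hAinv j)
      simpa [Module.End.mul_apply] using h2
    have h3 : A j (Ainv j (A j x) - x) = 0 := by rw [map_sub, h1, sub_self]
    have h4 := Azero j _ h3
    rwa [sub_eq_zero] at h4
  have lampos : ∀ j, 0 < lam j := by
    intro j
    obtain ⟨v, hv⟩ := (hlamEig j).1.exists_hasEigenvector
    have hApp : A j v = lam j • v := hv.apply_eq_smul
    have h1 : 0 < ⟪A j v, v⟫ := hpos j v hv.right
    rw [hApp, real_inner_smul_left] at h1
    have h2 : (0:ℝ) < ⟪v, v⟫ := by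
      rw [real_inner_self_eq_norm_sq]
      have : 0 < ‖v‖ := norm_pos_iff.mpr hv.right
      positivity
    nlinarith
  -- smoother adjoint identities
  have Kapp : ∀ j (u : V j), K j u = u - R j (A j u) := by
    intro j u
    rw [hK]
    simp [LinearMap.sub_apply, Module.End.mul_apply, Module.End.one_apply]
  have Kstapp : ∀ j (u : V j), Kst j u = u - Rt j (A j u) := by
    intro j u
    rw [hKst]
    simp [LinearMap.sub_apply, Module.End.mul_apply, Module.End.one_apply]
  have Kadj : ∀ j (u v : V j), ⟪A j (K j u), v⟫ = ⟪A j u, Kst j v⟫ := by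
    intro j u v
    rw [Kapp, Kstapp, map_sub, inner_sub_left, inner_sub_right]
    congr 1
    calc ⟪A j (R j (A j u)), v⟫ = ⟪R j (A j u), A j v⟫ := hsym j _ v
      _ = ⟪A j u, Rt j (A j v)⟫ := hRt j _ _
  have Kstadj : ∀ j (u v : V j), ⟪A j (Kst j u), v⟫ = ⟪A j u, K j v⟫ := by
    intro j u v
    calc ⟪A j (Kst j u), v⟫ = ⟪A j v, Kst j u⟫ := asym j _ v
      _ = ⟪A j (K j v), u⟫ := (Kadj j v u).symm
      _ = ⟪A j u, K j v⟫ := asym j _ u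
  set T : ∀ j, Module.End ℝ (V j) := fun j => Kst j * K j with hTdef
  have Tapp : ∀ j (u : V j), T j u = Kst j (K j u) := fun j u => rfl
  have Tadj : ∀ j (u v : V j), ⟪A j (T j u), v⟫ = ⟪A j u, T j v⟫ := by
    intro j u v
    rw [Tapp, Tapp]
    calc ⟪A j (Kst j (K j u)), v⟫ = ⟪A j (K j u), K j v⟫ := Kstadj j _ v
      _ = ⟪A j u, Kst j (K j v)⟫ := Kadj j u _
  have Tpowapp : ∀ j (n : ℕ) (u : V j), (T j ^ (n+1)) u = T j ((T j ^ n) u) := by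
    intro j n u
    rw [pow_succ']; rfl
  have Tpowadj : ∀ j (n : ℕ) (u v : V j), ⟪A j ((T j ^ n) u), v⟫ = ⟪A j u, (T j ^ n) v⟫ := by
    intro j n
    induction n with
    | zero => intro u v; simp
    | succ n ih =>
      intro u v
      calc ⟪A j ((T j ^ (n+1)) u), v⟫ = ⟪A j (T j ((T j ^ n) u)), v⟫ := by rw [Tpowapp]
        _ = ⟪A j ((T j ^ n) u), T j v⟫ := Tadj j _ v
        _ = ⟪A j u, (T j ^ n) (T j v)⟫ := ih u (T j v)
        _ = ⟪A j u, (T j ^ (n+1)) v⟫ := by rw [pow_succ]; rfl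
  have Tnn : ∀ j (u : V j), 0 ≤ ⟪A j (T j u), u⟫ := by
    intro j u
    rw [Tapp, Kstadj]
    exact annn j (K j u)
  have RtilApp : ∀ j (u : V j), Rtil j (A j u) = u - T j u := by
    intro j u
    rw [hRtil]
    simp only [Module.End.mul_apply, LinearMap.sub_apply, Module.End.one_apply, AinvA]
    rw [Tapp]
  have oneSubT : ∀ j (u : V j), ‖A j u‖^2 / lam j ≤ C5 * ⟪A j (u - T j u), u⟫ := by
    intro j u
    have h := hsmooth j (A j u)
    rw [RtilApp] at h
    have h2 : ⟪u - T j u, A j u⟫ = ⟪A j (u - T j u), u⟫ := (hsym j (u - T j u) u).symm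
    rwa [h2] at h
  have oneSubTnn : ∀ j (u : V j), 0 ≤ ⟪A j (u - T j u), u⟫ := by
    intro j u
    have h := oneSubT j u
    have h2 : 0 ≤ ‖A j u‖^2 / lam j := div_nonneg (by positivity) (lampos j).le
    nlinarith
  have crossr : ∀ j (u : V j) (a b : ℕ), ⟪A j ((T j ^ a) u), (T j ^ b) u⟫ = ⟪A j ((T j ^ (a + b)) u), u⟫ := by
    intro j u a b
    calc ⟪A j ((T j ^ a) u), (T j ^ b) u⟫ = ⟪A j ((T j ^ b) ((T j ^ a) u)), u⟫ :=
          (Tpowadj j b _ u).symm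
      _ = ⟪A j ((T j ^ (a + b)) u), u⟫ := by rw [add_comm a b, pow_add]; rfl
  -- decay of the smoothing quantities d k = c k - c (k+1)
  have dstep : ∀ j (u : V j) (k : ℕ),
      ⟪A j ((T j ^ (k+1)) u), u⟫ - ⟪A j ((T j ^ (k+2)) u), u⟫ ≤
      ⟪A j ((T j ^ k) u), u⟫ - ⟪A j ((T j ^ (k+1)) u), u⟫ := by
    intro j u k
    rcases Nat.even_or_odd k with ⟨l, hl⟩ | ⟨l, hl⟩
    · subst hl
      have h0 := annn j ((T j ^ l) u - (T j ^ (l+1)) u)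
      have e : ⟪A j ((T j ^ l) u - (T j ^ (l+1)) u), (T j ^ l) u - (T j ^ (l+1)) u⟫
          = ⟪A j ((T j ^ (l+l)) u), u⟫ - ⟪A j ((T j ^ (l+1+l)) u), u⟫
            - (⟪A j ((T j ^ (l+(l+1))) u), u⟫ - ⟪A j ((T j ^ (l+1+(l+1))) u), u⟫) := by
        rw [map_sub, inner_sub_left, inner_sub_right, inner_sub_right,
          crossr, crossr, crossr, crossr]
        ring
      rw [e] at h0
      have i1 : l+1+l = l+l+1 := by omega
      have i2 : l+(l+1) = l+l+1 := by omega
      have i3 : l+1+(l+1) = l+l+2 := by omega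
      rw [i1, i2, i3] at h0
      linarith
    · subst hl
      have h0 := Tnn j ((T j ^ l) u - (T j ^ (l+1)) u)
      have e : ⟪A j (T j ((T j ^ l) u - (T j ^ (l+1)) u)), (T j ^ l) u - (T j ^ (l+1)) u⟫
          = ⟪A j ((T j ^ (l+1+l)) u), u⟫ - ⟪A j ((T j ^ (l+2+l)) u), u⟫
            - (⟪A j ((T j ^ (l+1+(l+1))) u), u⟫ - ⟪A j ((T j ^ (l+2+(l+1))) u), u⟫) := by
        rw [map_sub, ← Tpowapp, ← Tpowapp, map_sub, inner_sub_left, inner_sub_right,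
          inner_sub_right, crossr, crossr, crossr, crossr]
        ring
      rw [e] at h0
      have i1 : l+1+l = 2*l+1 := by omega
      have i2 : l+2+l = 2*l+1+1 := by omega
      have i3 : l+1+(l+1) = 2*l+1+1 := by omega
      have i4 : l+2+(l+1) = 2*l+1+2 := by omega
      rw [i1, i2, i3, i4] at h0
      linarith
  have deven : ∀ j (u : V j) (l : ℕ),
      0 ≤ ⟪A j ((T j ^ (l+l)) u), u⟫ - ⟪A j ((T j ^ (l+l+1)) u), u⟫ := by
    intro j u l
    have h0 := oneSubTnn j ((T j ^ l) u)
    have e : ⟪A j ((T j ^ l) u - T j ((T j ^ l) u)), (T j ^ l) u⟫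
        = ⟪A j ((T j ^ (l+l)) u), u⟫ - ⟪A j ((T j ^ (l+1+l)) u), u⟫ := by
      rw [map_sub, ← Tpowapp, inner_sub_left, crossr, crossr]
    rw [e] at h0
    have i1 : l+1+l = l+l+1 := by omega
    rwa [i1] at h0
  have dmono : ∀ j (u : V j) (k k' : ℕ), k ≤ k' →
      ⟪A j ((T j ^ k') u), u⟫ - ⟪A j ((T j ^ (k'+1)) u), u⟫ ≤
      ⟪A j ((T j ^ k) u), u⟫ - ⟪A j ((T j ^ (k+1)) u), u⟫ := by
    intro j u k k' hk
    induction k', hk using Nat.le_induction with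
    | base => exact le_rfl
    | succ n hn ih =>
      have := dstep j u n
      linarith
  have dnn : ∀ j (u : V j) (k : ℕ),
      0 ≤ ⟪A j ((T j ^ k) u), u⟫ - ⟪A j ((T j ^ (k+1)) u), u⟫ := by
    intro j u k
    have h1 := dmono j u k (k+k) (by omega)
    have h2 := deven j u k
    linarith
  have nudnu : ∀ j (u : V j),
      (ν : ℝ) * (⟪A j ((T j ^ ν) u), u⟫ - ⟪A j ((T j ^ (ν+1)) u), u⟫) ≤
      ⟪A j u, u⟫ - ⟪A j ((T j ^ ν) u), u⟫ := by
    intro j u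
    have hsum := Finset.card_nsmul_le_sum (Finset.range ν)
      (fun i => ⟪A j ((T j ^ i) u), u⟫ - ⟪A j ((T j ^ (i+1)) u), u⟫)
      (⟪A j ((T j ^ ν) u), u⟫ - ⟪A j ((T j ^ (ν+1)) u), u⟫)
      (fun i hi => dmono j u i ν (le_of_lt (Finset.mem_range.mp hi)))
    rw [Finset.sum_range_sub' (fun i => ⟪A j ((T j ^ i) u), u⟫) ν] at hsum
    rw [Finset.card_range, nsmul_eq_mul] at hsum
    simpa using hsum
  -- prolongation adjoint identity
  have hIP : ∀ j (x : V j) (w : V (j + 1)), ⟪A (j+1) (I j x), w⟫ = ⟪A j x, P j w⟫ := by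
    intro j x w
    calc ⟪A (j+1) (I j x), w⟫ = ⟪A (j+1) w, I j x⟫ := asym (j+1) _ w
      _ = ⟪A j (P j w), x⟫ := (hP j w x).symm
      _ = ⟪A j x, P j w⟫ := asym j _ x
  have hKtilT : ∀ j, Ktil j = T j ^ m := by
    intro j
    rw [hKtil j, hmdiv]
  set Er : ∀ j, V j → V j := fun j x => x - B j (A j x) with hErdef
  have main : ∀ j : ℕ,
      (∀ u u' : V j, Er j (u + u') = Er j u + Er j u') ∧
      (∀ (t : ℝ) (u : V j), Er j (t • u) = t • Er j u) ∧
      (∀ u v : V j, ⟪A j (Er j u), v⟫ = ⟪A j (Er j v), u⟫) ∧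
      (∀ u : V j, 0 ≤ ⟪A j (Er j u), u⟫) ∧
      (∀ u : V j, ⟪A j (Er j u), u⟫ ≤ σ * ⟪A j u, u⟫) := by
    intro j
    induction j with
    | zero =>
      have hz : ∀ u : V 0, Er 0 u = 0 := by
        intro u
        have h1 := hB0 (A 0 u)
        have h2 : A 0 (u - B 0 (A 0 u)) = 0 := by rw [map_sub, h1, sub_self]
        exact Azero 0 _ h2
      refine ⟨?_, ?_, ?_, ?_, ?_⟩
      · intro u u'; simp [hz]
      · intro t u; simp [hz]
      · intro u v; simp [hz]
      · intro u; simp [hz]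
      · intro u
        simp only [hz, map_zero, inner_zero_left]
        exact mul_nonneg hσpos.le (annn 0 u)
    | succ j ih =>
      obtain ⟨ihadd, ihsmul, ihsa, ihnn, ihbnd⟩ := ih
      have hiter : ∀ y : V j, (fun w => w - B j (A j w))^[2] y = Er j (Er j y) := by
        intro y; rfl
      -- bound for the doubled coarse correction, via Cauchy–Schwarz in the A-form
      have Xfact : ∀ q : V j,
          0 ≤ ⟪A j (Er j (Er j q)), q⟫ ∧
          ⟪A j (Er j (Er j q)), q⟫ ≤ σ * ⟪A j q, q⟫ := by
        intro q
        have hX0 : ⟪A j (Er j (Er j q)), q⟫ = ⟪A j (Er j q), Er j q⟫ := ihsa (Er j q) q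
        have hXnn : 0 ≤ ⟪A j (Er j (Er j q)), q⟫ := by rw [hX0]; exact annn j _
        refine ⟨hXnn, ?_⟩
        have hγnn : 0 ≤ ⟪A j q, q⟫ := annn j q
        have hquad : ∀ t : ℝ,
            0 ≤ ⟪A j (Er j (Er j q)), Er j q⟫ * (t * t)
              + (2 * ⟪A j (Er j (Er j q)), q⟫) * t + ⟪A j (Er j q), q⟫ := by
          intro t
          have h0 := ihnn (q + t • Er j q)
          have e : ⟪A j (Er j (q + t • Er j q)), q + t • Er j q⟫
              = ⟪A j (Er j (Er j q)), Er j q⟫ * (t * t)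
                + (2 * ⟪A j (Er j (Er j q)), q⟫) * t + ⟪A j (Er j q), q⟫ := by
            rw [ihadd, ihsmul, map_add, map_smul, inner_add_left, inner_add_right,
              inner_add_right, real_inner_smul_left, real_inner_smul_right,
              real_inner_smul_right, ← hX0]
            simp only [real_inner_smul_left, real_inner_smul_right]
            ring
          rw [e] at h0
          exact h0
        have hdisc := discrim_le_zero hquad
        rw [discrim] at hdisc
        have hA2nn : 0 ≤ ⟪A j (Er j (Er j q)), Er j q⟫ := ihnn (Er j q)
        have hA2le : ⟪A j (Er j (Er j q)), Er j q⟫ ≤ σ * ⟪A j (Er j q), Er j q⟫ :=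
          ihbnd (Er j q)
        have hC0nn : 0 ≤ ⟪A j (Er j q), q⟫ := ihnn q
        have hC0le : ⟪A j (Er j q), q⟫ ≤ σ * ⟪A j q, q⟫ := ihbnd q
        rcases eq_or_lt_of_le hXnn with h | h
        · rw [← h]
          exact mul_nonneg hσpos.le hγnn
        · rw [hX0] at h hdisc ⊢
          set Y : ℝ := ⟪A j (Er j q), Er j q⟫ with hY
          set Z : ℝ := ⟪A j (Er j (Er j q)), Er j q⟫ with hZ
          set D : ℝ := ⟪A j (Er j q), q⟫ with hD
          set g : ℝ := ⟪A j q, q⟫ with hg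
          have s1 : Y * Y ≤ Z * D := by nlinarith [hdisc]
          have s2 : Z * D ≤ (σ * Y) * D := mul_le_mul_of_nonneg_right hA2le hC0nn
          have s3 : (σ * Y) * D ≤ (σ * Y) * (σ * g) :=
            mul_le_mul_of_nonneg_left hC0le (mul_nonneg hσpos.le h.le)
          have s4 : Y ≤ σ * (σ * g) := by nlinarith [s1, s2, s3, h]
          nlinarith [s4, hσ1, hσpos.le, hγnn]
      -- the error-propagation identity in weak form
      have Eform : ∀ u v : V (j+1),
          ⟪A (j+1) (Er (j+1) u), v⟫ =
            (⟪A (j+1) (Ktil (j+1) u), Ktil (j+1) v⟫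
              - ⟪A j (P j (Ktil (j+1) u)), P j (Ktil (j+1) v)⟫)
            + ⟪A j (Er j (Er j (P j (Ktil (j+1) u)))), P j (Ktil (j+1) v)⟫ := by
        intro u v
        have h := hBrec j u v
        rw [hiter] at h
        calc ⟪A (j+1) (Er (j+1) u), v⟫
            = ⟪A (j+1) (Ktil (j+1) u - I j (P j (Ktil (j+1) u)) +
                I j (Er j (Er j (P j (Ktil (j+1) u))))), Ktil (j+1) v⟫ := h
          _ = (⟪A (j+1) (Ktil (j+1) u), Ktil (j+1) v⟫
              - ⟪A j (P j (Ktil (j+1) u)), P j (Ktil (j+1) v)⟫)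
            + ⟪A j (Er j (Er j (P j (Ktil (j+1) u)))), P j (Ktil (j+1) v)⟫ := by
              rw [map_add, map_sub, inner_add_left, inner_sub_left, hIP, hIP]
      have sa : ∀ u v : V (j+1), ⟪A (j+1) (Er (j+1) u), v⟫ = ⟪A (j+1) (Er (j+1) v), u⟫ := by
        intro u v
        rw [Eform u v, Eform v u]
        have h1 := asym (j+1) (Ktil (j+1) u) (Ktil (j+1) v)
        have h2 := asym j (P j (Ktil (j+1) u)) (P j (Ktil (j+1) v))
        have h3 : ⟪A j (Er j (Er j (P j (Ktil (j+1) u)))), P j (Ktil (j+1) v)⟫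
            = ⟪A j (Er j (Er j (P j (Ktil (j+1) v)))), P j (Ktil (j+1) u)⟫ := by
          calc ⟪A j (Er j (Er j (P j (Ktil (j+1) u)))), P j (Ktil (j+1) v)⟫
              = ⟪A j (Er j (P j (Ktil (j+1) v))), Er j (P j (Ktil (j+1) u))⟫ :=
                ihsa (Er j (P j (Ktil (j+1) u))) (P j (Ktil (j+1) v))
            _ = ⟪A j (Er j (P j (Ktil (j+1) u))), Er j (P j (Ktil (j+1) v))⟫ := asym j _ _
            _ = ⟪A j (Er j (Er j (P j (Ktil (j+1) v)))), P j (Ktil (j+1) u)⟫ :=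
                (ihsa (Er j (P j (Ktil (j+1) v))) (P j (Ktil (j+1) u))).symm
        linarith
      have addE : ∀ u u' : V (j+1), Er (j+1) (u + u') = Er (j+1) u + Er (j+1) u' := by
        intro u u'
        apply aeq (j+1)
        intro v
        have hR : ⟪A (j+1) (Er (j+1) u + Er (j+1) u'), v⟫
            = ⟪A (j+1) (Er (j+1) u), v⟫ + ⟪A (j+1) (Er (j+1) u'), v⟫ := by
          rw [map_add, inner_add_left]
        rw [hR, Eform (u+u') v, Eform u v, Eform u' v]
        simp only [map_add, ihadd, inner_add_left]
        ring
      have smulE : ∀ (t : ℝ) (u : V (j+1)), Er (j+1) (t • u) = t • Er (j+1) u := by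
        intro t u
        apply aeq (j+1)
        intro v
        have hR : ⟪A (j+1) (t • Er (j+1) u), v⟫ = t * ⟪A (j+1) (Er (j+1) u), v⟫ := by
          rw [map_smul, real_inner_smul_left]
        rw [hR, Eform (t • u) v, Eform u v]
        simp only [map_smul, ihsmul, real_inner_smul_left]
        ring
      have nnbnd : ∀ u : V (j+1),
          0 ≤ ⟪A (j+1) (Er (j+1) u), u⟫ ∧
          ⟪A (j+1) (Er (j+1) u), u⟫ ≤ σ * ⟪A (j+1) u, u⟫ := by
        intro u
        have hwT : Ktil (j+1) u = (T (j+1) ^ m) u := by rw [hKtilT]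
        have hβ1 : ⟪A (j+1) (Ktil (j+1) u - I j (P j (Ktil (j+1) u))), Ktil (j+1) u⟫
            = ⟪A (j+1) (Ktil (j+1) u), Ktil (j+1) u⟫
              - ⟪A j (P j (Ktil (j+1) u)), P j (Ktil (j+1) u)⟫ := by
          rw [map_sub, inner_sub_left, hIP]
        have hβnn : 0 ≤ ⟪A (j+1) (Ktil (j+1) u), Ktil (j+1) u⟫
            - ⟪A j (P j (Ktil (j+1) u)), P j (Ktil (j+1) u)⟫ := by
          have hsq := annn (j+1) (Ktil (j+1) u - I j (P j (Ktil (j+1) u)))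
          have e1 : ⟪A (j+1) (Ktil (j+1) u), I j (P j (Ktil (j+1) u))⟫
              = ⟪A j (P j (Ktil (j+1) u)), P j (Ktil (j+1) u)⟫ := by
            rw [asym, hIP]
          have e2 : ⟪A (j+1) (I j (P j (Ktil (j+1) u))), Ktil (j+1) u⟫
              = ⟪A j (P j (Ktil (j+1) u)), P j (Ktil (j+1) u)⟫ := hIP j _ _
          have e3 : ⟪A (j+1) (I j (P j (Ktil (j+1) u))), I j (P j (Ktil (j+1) u))⟫
              = ⟪A j (P j (Ktil (j+1) u)), P j (Ktil (j+1) u)⟫ := hinherit j _ _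
          have e : ⟪A (j+1) (Ktil (j+1) u - I j (P j (Ktil (j+1) u))),
              Ktil (j+1) u - I j (P j (Ktil (j+1) u))⟫
              = ⟪A (j+1) (Ktil (j+1) u), Ktil (j+1) u⟫
                - ⟪A j (P j (Ktil (j+1) u)), P j (Ktil (j+1) u)⟫ := by
            rw [map_sub, inner_sub_left, inner_sub_right, inner_sub_right, e1, e2, e3]
            ring
          rw [e] at hsq
          exact hsq
        have hγnn : 0 ≤ ⟪A j (P j (Ktil (j+1) u)), P j (Ktil (j+1) u)⟫ := annn j _
        have h3 : ⟪A (j+1) (Ktil (j+1) u - T (j+1) (Ktil (j+1) u)), Ktil (j+1) u⟫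
            = ⟪A (j+1) ((T (j+1) ^ ν) u), u⟫ - ⟪A (j+1) ((T (j+1) ^ (ν+1)) u), u⟫ := by
          rw [hwT, ← Tpowapp, map_sub, inner_sub_left, crossr, crossr]
          have i1 : m + m = ν := hm.symm
          have i2 : m + 1 + m = ν + 1 := by omega
          rw [i1, i2]
        have happ : ⟪A (j+1) (Ktil (j+1) u), Ktil (j+1) u⟫
            - ⟪A j (P j (Ktil (j+1) u)), P j (Ktil (j+1) u)⟫
            ≤ M * (⟪A (j+1) ((T (j+1) ^ ν) u), u⟫ - ⟪A (j+1) ((T (j+1) ^ (ν+1)) u), u⟫) := by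
          have h1 := happrox j (Ktil (j+1) u)
          have h2 := oneSubT (j+1) (Ktil (j+1) u)
          have h4 : ⟪A (j+1) (Ktil (j+1) u - I j (P j (Ktil (j+1) u))), Ktil (j+1) u⟫
              ≤ C4 * ‖A (j+1) (Ktil (j+1) u)‖^2 / lam (j+1) := le_trans (le_abs_self _) h1
          calc ⟪A (j+1) (Ktil (j+1) u), Ktil (j+1) u⟫
              - ⟪A j (P j (Ktil (j+1) u)), P j (Ktil (j+1) u)⟫
              = ⟪A (j+1) (Ktil (j+1) u - I j (P j (Ktil (j+1) u))), Ktil (j+1) u⟫ := hβ1.symm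
            _ ≤ C4 * (‖A (j+1) (Ktil (j+1) u)‖^2 / lam (j+1)) := by
                rw [← mul_div_assoc]; exact h4
            _ ≤ C4 * (C5 * ⟪A (j+1) (Ktil (j+1) u - T (j+1) (Ktil (j+1) u)), Ktil (j+1) u⟫) :=
                mul_le_mul_of_nonneg_left h2 hC4.le
            _ = M * ⟪A (j+1) (Ktil (j+1) u - T (j+1) (Ktil (j+1) u)), Ktil (j+1) u⟫ := by
                rw [hMdef]; ring
            _ = M * (⟪A (j+1) ((T (j+1) ^ ν) u), u⟫ - ⟪A (j+1) ((T (j+1) ^ (ν+1)) u), u⟫) := by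
                rw [h3]
        have hνd := nudnu (j+1) u
        have hdν := dnn (j+1) u ν
        have hcν : ⟪A (j+1) ((T (j+1) ^ ν) u), u⟫
            = ⟪A (j+1) (Ktil (j+1) u), Ktil (j+1) u⟫ := by
          have hcr := crossr (j+1) u m m
          rw [hm, ← hcr, ← hwT]
        obtain ⟨hXnn, hXle⟩ := Xfact (P j (Ktil (j+1) u))
        have hEf := Eform u u
        -- abbreviate all the scalar quantities
        set W : ℝ := ⟪A (j+1) (Ktil (j+1) u), Ktil (j+1) u⟫ with hWd
        set G : ℝ := ⟪A j (P j (Ktil (j+1) u)), P j (Ktil (j+1) u)⟫ with hGd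
        set X : ℝ := ⟪A j (Er j (Er j (P j (Ktil (j+1) u)))), P j (Ktil (j+1) u)⟫ with hXd
        set Cν : ℝ := ⟪A (j+1) ((T (j+1) ^ ν) u), u⟫ with hCνd
        set Cν1 : ℝ := ⟪A (j+1) ((T (j+1) ^ (ν+1)) u), u⟫ with hCν1d
        set C0 : ℝ := ⟪A (j+1) u, u⟫ with hC0d
        constructor
        · rw [hEf]
          linarith [hβnn, hXnn]
        · rw [hEf]
          have q1 : (1 - σ) * (W - G) ≤ (1 - σ) * (M * (Cν - Cν1)) :=
            mul_le_mul_of_nonneg_left happ (by linarith)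
          have q2 : (1 - σ) * (M * (Cν - Cν1)) = σ * ((ν : ℝ) * (Cν - Cν1)) := by
            rw [← mul_assoc, hσid, mul_assoc]
          have q3 : σ * ((ν : ℝ) * (Cν - Cν1)) ≤ σ * (C0 - Cν) :=
            mul_le_mul_of_nonneg_left hνd hσpos.le
          rw [hcν] at q1 q2 q3
          nlinarith [q1, q2, q3, hXle, hβnn, hγnn, hσpos.le]
      exact ⟨addE, smulE, sa, fun u => (nnbnd u).1, fun u => (nnbnd u).2⟩
  refine ⟨M, hMpos, hσlt, ?_⟩
  intro j u
  obtain ⟨-, -, -, hnn, hbnd⟩ := main j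
  have h1 : 0 ≤ ⟪A j (u - B j (A j u)), u⟫ := hnn u
  have h2 : ⟪A j (u - B j (A j u)), u⟫ ≤ σ * ⟪A j u, u⟫ := hbnd u
  rw [abs_of_nonneg h1]
  exact h2
end

section
/- Under the interpolation estimates ‖w − ℐ^i w‖_{L²} + δ_i|w − ℐ^i w|_{H¹} ≤ Cδ_i²‖w‖_{H²} (i = j−1, j), the projection estimates ‖w − Π₁⁰_{E_{j-1}} w‖_{L²(E_{j-1})} ≤ Cδ_j²‖w‖_{H²(E_{j-1})} (elementwise over fine elements) and the comparison lemma ‖Π₁⁰ u − I_{j-1}^j u‖_{L²(E_{j-1})} ≤ C‖Π₁⁰ u − u‖_{L²(E_{j-1})} for coarse VEM functions u, one has for every w ∈ H²(Ω): ‖ℐ^j w − I_{j-1}^j ℐ^{j-1} w‖_{L²(Ω)} ≤ C δ_j² ‖w‖_{H²(Ω)}, with C depending only on δ_j/δ_{j-1}, δ_{j-1}/δ_j and the maximal number of fine elements sharing a node. -/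
/-- Hypothesis H8 of the BPX framework: stability of the composite coarse
interpolation, `‖ℐʲ w − I_{j-1}^j ℐ^{j-1} w‖_{L²(Ω)} ≤ C δ_j² ‖w‖_{H²(Ω)}`. -/
theorem composite_interpolation_estimate
    {X : Type*} [AddCommGroup X] [Module ℝ X]
    (L2 H1 H2n : X → ℝ)
    (hL2nonneg : ∀ a, 0 ≤ L2 a)
    (hL2add : ∀ a b, L2 (a + b) ≤ L2 a + L2 b)
    (hL2neg : ∀ a, L2 (-a) = L2 a)
    (hH1nonneg : ∀ a, 0 ≤ H1 a)
    (hH2nonneg : ∀ a, 0 ≤ H2n a)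
    (Jf Jc Pi0 Iop : X →ₗ[ℝ] X)   -- ℐʲ, ℐ^{j-1}, Π₁⁰ (elementwise), I_{j-1}^j
    (Vc : Submodule ℝ X)           -- coarse VEM space
    (hJcmem : ∀ w : X, Jc w ∈ Vc)
    (δj δjm1 : ℝ) (hδj : 0 < δj) (hδjm1 : 0 < δjm1)
    (Cr : ℝ) (hCr : 0 < Cr) (hr1 : δjm1 ≤ Cr * δj) (hr2 : δj ≤ Cr * δjm1)
    (C1 : ℝ) (hC1 : 0 ≤ C1)
    -- interpolation estimates on the fine and coarse levels
    (hinterpf : ∀ w : X, L2 (w - Jf w) + δj * H1 (w - Jf w) ≤ C1 * δj ^ 2 * H2n w)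
    (hinterpc : ∀ w : X, L2 (w - Jc w) + δjm1 * H1 (w - Jc w) ≤ C1 * δjm1 ^ 2 * H2n w)
    (C2 : ℝ) (hC2 : 0 ≤ C2)
    -- projection estimates (elementwise over fine elements)
    (hproj2 : ∀ w : X, L2 (w - Pi0 w) ≤ C2 * δj ^ 2 * H2n w)
    (C2' : ℝ) (hC2' : 0 ≤ C2')
    (hproj1 : ∀ v : X, L2 (v - Pi0 v) ≤ C2' * δjm1 * H1 v)
    (C3 : ℝ) (hC3 : 0 ≤ C3)
    -- comparison lemma for coarse VEM functions
    (hcomp : ∀ u ∈ Vc, L2 (Pi0 u - Iop u) ≤ C3 * L2 (Pi0 u - u)) :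
    ∃ C : ℝ, 0 < C ∧
      ∀ w : X, L2 (Jf w - Iop (Jc w)) ≤ C * δj ^ 2 * H2n w := by

  refine ⟨C1 + C1 * Cr ^ 2 + (1 + C3) * (C2 + C2' * C1 * Cr ^ 2) + 1, by positivity, ?_⟩
  intro w
  have hH2 := hH2nonneg w
  have hδm : δjm1 ^ 2 ≤ Cr ^ 2 * δj ^ 2 := by nlinarith
  have h1 : L2 (w - Jf w) ≤ C1 * δj ^ 2 * H2n w := by
    have := hinterpf w
    nlinarith [hH1nonneg (w - Jf w), hδj.le]
  have hkey : C1 * δjm1 ^ 2 * H2n w ≤ C1 * Cr ^ 2 * δj ^ 2 * H2n w := by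
    nlinarith [mul_nonneg hC1 hH2]
  have h2 : L2 (w - Jc w) ≤ C1 * Cr ^ 2 * δj ^ 2 * H2n w := by
    have := hinterpc w
    nlinarith [mul_nonneg hδjm1.le (hH1nonneg (w - Jc w))]
  have hH1c : δjm1 * H1 (w - Jc w) ≤ C1 * δjm1 ^ 2 * H2n w := by
    have := hinterpc w
    nlinarith [hL2nonneg (w - Jc w)]
  have h3 : L2 ((w - Jc w) - Pi0 (w - Jc w)) ≤ C2' * C1 * Cr ^ 2 * δj ^ 2 * H2n w := by
    have h := hproj1 (w - Jc w)
    have hk : C2' * (δjm1 * H1 (w - Jc w)) ≤ C2' * (C1 * δjm1 ^ 2 * H2n w) :=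
      mul_le_mul_of_nonneg_left hH1c hC2'
    have hk2 : C2' * (C1 * δjm1 ^ 2 * H2n w) ≤ C2' * (C1 * Cr ^ 2 * δj ^ 2 * H2n w) := by
      have := mul_le_mul_of_nonneg_left hkey hC2'
      nlinarith
    nlinarith
  have h4 : L2 (w - Pi0 w) ≤ C2 * δj ^ 2 * H2n w := hproj2 w
  have hdecomp : Jc w - Pi0 (Jc w) = -((w - Jc w) - Pi0 (w - Jc w)) + (w - Pi0 w) := by
    simp only [map_sub]
    abel
  have h5 : L2 (Jc w - Pi0 (Jc w)) ≤ (C2 + C2' * C1 * Cr ^ 2) * δj ^ 2 * H2n w := by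
    calc L2 (Jc w - Pi0 (Jc w))
        ≤ L2 (-((w - Jc w) - Pi0 (w - Jc w))) + L2 (w - Pi0 w) := by
          rw [hdecomp]; exact hL2add _ _
      _ = L2 ((w - Jc w) - Pi0 (w - Jc w)) + L2 (w - Pi0 w) := by rw [hL2neg]
      _ ≤ _ := by nlinarith
  have h6 : L2 (Pi0 (Jc w) - Iop (Jc w)) ≤ C3 * ((C2 + C2' * C1 * Cr ^ 2) * δj ^ 2 * H2n w) := by
    have hc := hcomp (Jc w) (hJcmem w)
    have hn : L2 (Pi0 (Jc w) - Jc w) = L2 (Jc w - Pi0 (Jc w)) := by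
      rw [← hL2neg (Jc w - Pi0 (Jc w)), neg_sub]
    rw [hn] at hc
    calc L2 (Pi0 (Jc w) - Iop (Jc w)) ≤ C3 * L2 (Jc w - Pi0 (Jc w)) := hc
      _ ≤ _ := by nlinarith
  have hsplit : Jf w - Iop (Jc w)
      = (-(w - Jf w)) + ((w - Jc w) + ((Jc w - Pi0 (Jc w)) + (Pi0 (Jc w) - Iop (Jc w)))) := by
    abel
  have htri : L2 (Jf w - Iop (Jc w))
      ≤ L2 (w - Jf w) + (L2 (w - Jc w) + (L2 (Jc w - Pi0 (Jc w)) + L2 (Pi0 (Jc w) - Iop (Jc w)))) := by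
    rw [hsplit]
    calc L2 _ ≤ L2 (-(w - Jf w)) + L2 ((w - Jc w) + ((Jc w - Pi0 (Jc w)) + (Pi0 (Jc w) - Iop (Jc w)))) :=
          hL2add _ _
      _ ≤ _ := by
          rw [hL2neg]
          have t2 := hL2add (w - Jc w) ((Jc w - Pi0 (Jc w)) + (Pi0 (Jc w) - Iop (Jc w)))
          have t3 := hL2add (Jc w - Pi0 (Jc w)) (Pi0 (Jc w) - Iop (Jc w))
          linarith
  nlinarith [hL2nonneg (Jf w - Iop (Jc w))]
end
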